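/- arXiv:1903.05582 — 4 statements merged into one kernel-verified Lean document; each statement's English description precedes it below -/
import Mathlib

section
/- Let X be a real Hilbert space, K ⊆ X a nonempty closed convex set, η a parameter in a Hilbert space Y, j(η,·) : K → ℝ convex, positively homogeneous and Lipschitz continuous, f : I → X a function, t ∈ I, and z, u ∈ X. Define J(η,v) = j(η,v) for v ∈ K and +∞ otherwise, C(η) = ∂J(η,·)(0) and C(η,t) = f(t) - C(η). Then the following two statements are equivalent: (i) u ∈ K and j(η,v) - j(η,u) ≥ ⟨f(t) - z, v - u⟩ for all v ∈ K; (ii) -u ∈ N_{C(η,t)}(z). -/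
open RealInnerProductSpace

/-- The normal cone of a set `D` at a point `z`:
`N_D(z) = {ξ : ⟪ξ, w - z⟫ ≤ 0 ∀ w ∈ D}` if `z ∈ D`, and `∅` otherwise. -/
def normalCone {X : Type*} [NormedAddCommGroup X] [InnerProductSpace ℝ X]
    (D : Set X) (z : X) : Set X :=
  {ξ : X | z ∈ D ∧ ∀ w ∈ D, ⟪ξ, w - z⟫ ≤ 0}

/-!
A positively homogeneous, convex, lower semicontinuous `J` is the support function of
`C = ∂J(0) = {ξ : ⟪ξ, ·⟫ ≤ J}`: its epigraph is a closed convex cone, so a point below the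
epigraph is separated from it by a functional that is nonpositive on it, and normalising the
vertical component of that functional yields an element of `C`. Consequently
`σ_C(u) ≤ ⟪F, u⟫` forces `u ∈ K` and `j u ≤ ⟪F, u⟫`. On the other hand, by homogeneity the
variational inequality at `u` says exactly that `F = f t - z ∈ C` and `j u ≤ ⟪F, u⟫`, while
`-u ∈ N_{f t - C}(z)` says that `F ∈ C` and `σ_C(u) ≤ ⟪F, u⟫`.
-/

lemma nonpos_of_forall_pos_mul_le {a b : ℝ} (h : ∀ l : ℝ, 0 < l → l * a ≤ b) : a ≤ 0 := by
  by_contra! ha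
  have := h ((|b| + 1) / a) (by positivity)
  rw [div_mul_cancel₀ _ ha.ne'] at this
  linarith [le_abs_self b]

theorem exists_dual_nonpos_on_cone_of_notMem {E : Type*} [TopologicalSpace E] [AddCommGroup E]
    [IsTopologicalAddGroup E] [Module ℝ E] [ContinuousSMul ℝ E] [LocallyConvexSpace ℝ E]
    {S : Set E} {p : E} (hconv : Convex ℝ S) (hcl : IsClosed S) (h0 : (0 : E) ∈ S)
    (hcone : ∀ c : ℝ, 0 < c → ∀ x ∈ S, c • x ∈ S) (hp : p ∉ S) :
    ∃ φ : StrongDual ℝ E, (∀ x ∈ S, φ x ≤ 0) ∧ 0 < φ p := by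
  obtain ⟨φ, c, hφS, hφp⟩ := geometric_hahn_banach_closed_point hconv hcl hp
  have hc : 0 < c := by simpa using hφS 0 h0
  refine ⟨φ, fun x hx => nonpos_of_forall_pos_mul_le (b := c) fun l hl => ?_, hc.trans hφp⟩
  simpa using (hφS _ (hcone l hl x hx)).le

section Hilbert

variable {X : Type*} [NormedAddCommGroup X] [InnerProductSpace ℝ X]

lemma neg_mem_normalCone_sub_image_iff {C : Set X} {a z u : X} :
    -u ∈ normalCone ((fun c => a - c) '' C) z ↔ a - z ∈ C ∧ ∀ c ∈ C, ⟪c, u⟫ ≤ ⟪a - z, u⟫ := by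
  have hz : z ∈ (fun c => a - c) '' C ↔ a - z ∈ C :=
    ⟨fun ⟨c, hc, hcz⟩ => by rwa [← hcz, sub_sub_cancel], fun h => ⟨a - z, h, sub_sub_cancel a z⟩⟩
  have hinner (c : X) : ⟪-u, a - c - z⟫ = ⟪c, u⟫ - ⟪a - z, u⟫ := by
    rw [inner_neg_left, sub_right_comm, inner_sub_right, real_inner_comm u c,
      real_inner_comm u (a - z)]
    ring
  simp only [normalCone, Set.mem_ofPred_eq, hz, Set.forall_mem_image, hinner, sub_nonpos]

/-- The subdifferential `∂J(0)` of the extension `J` of `g` by `+∞` outside `K`. -/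
def linearMinorants (K : Set X) (g : X → ℝ) : Set X :=
  {ξ | ∀ v ∈ K, ⟪ξ, v⟫ ≤ g v}

variable {K : Set X} {g : X → ℝ}

lemma apply_zero_of_posHomogeneous (hK0 : (0 : X) ∈ K)
    (hg : ∀ l : ℝ, 0 < l → ∀ v ∈ K, g (l • v) = l * g v) : g 0 = 0 := by
  have := hg 2 two_pos 0 hK0
  rw [smul_zero] at this
  linarith

lemma forall_inner_sub_le_sub_iff (hcone : ∀ c : ℝ, 0 < c → ∀ x ∈ K, c • x ∈ K)
    (hK0 : (0 : X) ∈ K) (hg : ∀ l : ℝ, 0 < l → ∀ v ∈ K, g (l • v) = l * g v) {F u : X} :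
    (∀ v ∈ K, ⟪F, v - u⟫ ≤ g v - g u) ↔ F ∈ linearMinorants K g ∧ g u ≤ ⟪F, u⟫ := by
  simp only [inner_sub_right]
  refine ⟨fun h => ⟨fun v hv => ?_, ?_⟩, fun ⟨hF, hFu⟩ v hv => by linarith [hF v hv]⟩
  · suffices ⟪F, v⟫ - g v ≤ 0 by linarith
    refine nonpos_of_forall_pos_mul_le (b := ⟪F, u⟫ - g u) fun l hl => ?_
    have := h (l • v) (hcone l hl v hv)
    rw [hg l hl v hv, real_inner_smul_right] at this
    linarith
  · have := h 0 hK0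
    rw [apply_zero_of_posHomogeneous hK0 hg, inner_zero_right] at this
    linarith

variable [CompleteSpace X]

lemma exists_eq_inner_add_mul (φ : StrongDual ℝ (X × ℝ)) :
    ∃ ξ : X, ∃ s : ℝ, ∀ x r, φ (x, r) = ⟪ξ, x⟫ + r * s := by
  refine ⟨(InnerProductSpace.toDual ℝ X).symm (φ.comp (.inl ℝ X ℝ)), φ (0, 1), fun x r => ?_⟩
  have hr : ((0 : X), r) = r • ((0 : X), (1 : ℝ)) := by simp
  rw [InnerProductSpace.toDual_symm_apply, ← φ.comp_inl_add_comp_inr,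
    ContinuousLinearMap.comp_apply, ContinuousLinearMap.comp_apply, ContinuousLinearMap.inr_apply,
    hr, map_smul, smul_eq_mul, mul_comm]

theorem exists_mem_linearMinorants_lt_inner (hKcl : IsClosed K)
    (hcone : ∀ c : ℝ, 0 < c → ∀ x ∈ K, c • x ∈ K) (hK0 : (0 : X) ∈ K) (hconv : ConvexOn ℝ K g)
    (hlsc : LowerSemicontinuousOn g K) (hg : ∀ l : ℝ, 0 < l → ∀ v ∈ K, g (l • v) = l * g v)
    {u : X} (hu : u ∈ K) {a : ℝ} (ha : a < g u) :
    ∃ ξ ∈ linearMinorants K g, a < ⟪ξ, u⟫ := by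
  set E : Set (X × ℝ) := {p | p.1 ∈ K ∧ g p.1 ≤ p.2}
  have hEcone : ∀ c : ℝ, 0 < c → ∀ p ∈ E, c • p ∈ E := by
    rintro c hc ⟨x, r⟩ ⟨hx, hxr⟩
    refine ⟨hcone c hc x hx, ?_⟩
    simp only [Prod.smul_mk, smul_eq_mul, hg c hc x hx]
    gcongr
  have hE0 : (0 : X × ℝ) ∈ E := ⟨hK0, (apply_zero_of_posHomogeneous hK0 hg).le⟩
  obtain ⟨φ, hφE, hφu⟩ := exists_dual_nonpos_on_cone_of_notMem hconv.convex_epigraph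
    ((lowerSemicontinuousOn_iff_isClosed_epigraph hKcl).1 hlsc) hE0 hEcone
    (p := (u, a)) fun h => h.2.not_gt ha
  obtain ⟨ξ, s, hφ⟩ := exists_eq_inner_add_mul φ
  have hE (x : X) (hx : x ∈ K) (r : ℝ) (hr : g x ≤ r) : ⟪ξ, x⟫ + r * s ≤ 0 :=
    hφ x r ▸ hφE (x, r) ⟨hx, hr⟩
  rw [hφ] at hφu
  have hs : s < 0 := by
    refine lt_of_le_of_ne (nonpos_of_forall_pos_mul_le (b := -⟪ξ, u⟫ - g u * s)
      fun l hl => ?_) fun hs0 => ?_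
    · linarith [hE u hu (g u + l) (by linarith)]
    · subst hs0
      linarith [hE u hu (g u) le_rfl]
  refine ⟨(-s)⁻¹ • ξ, fun v hv => ?_, ?_⟩
  · rw [real_inner_smul_left, inv_mul_le_iff₀ (neg_pos.2 hs)]
    linarith [hE v hv (g v) le_rfl]
  · rw [real_inner_smul_left, lt_inv_mul_iff₀ (neg_pos.2 hs)]
    linarith

/-- The inequality `σ_C ≥ J` of the identity `J = σ_C` between `J` and the support function of
`C = ∂J(0)`. -/
theorem mem_and_le_of_forall_linearMinorants_inner_le (hKcl : IsClosed K)
    (hcone : ∀ c : ℝ, 0 < c → ∀ x ∈ K, c • x ∈ K) (hK0 : (0 : X) ∈ K) (hconv : ConvexOn ℝ K g)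
    (hlsc : LowerSemicontinuousOn g K) (hg : ∀ l : ℝ, 0 < l → ∀ v ∈ K, g (l • v) = l * g v)
    {u : X} {b : ℝ} (h : ∀ c ∈ linearMinorants K g, ⟪c, u⟫ ≤ b) : u ∈ K ∧ g u ≤ b := by
  have hu : u ∈ K := by
    by_contra hu
    obtain ⟨φ, hφK, hφu⟩ := exists_dual_nonpos_on_cone_of_notMem hconv.1 hKcl hK0 hcone hu
    set ξ := (InnerProductSpace.toDual ℝ X).symm φ
    have hξ (x : X) : ⟪ξ, x⟫ = φ x := InnerProductSpace.toDual_symm_apply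
    obtain ⟨c₀, hc₀, -⟩ := exists_mem_linearMinorants_lt_inner hKcl hcone hK0 hconv hlsc hg
      hK0 (a := -1) (by rw [apply_zero_of_posHomogeneous hK0 hg]; norm_num)
    have hray (l : ℝ) (hl : 0 < l) : c₀ + l • ξ ∈ linearMinorants K g := fun v hv => by
      rw [inner_add_left, real_inner_smul_left, hξ]
      nlinarith [hc₀ v hv, hφK v hv]
    have : φ u ≤ 0 := nonpos_of_forall_pos_mul_le (b := b - ⟪c₀, u⟫) fun l hl => by
      have := h _ (hray l hl)
      rw [inner_add_left, real_inner_smul_left, hξ] at this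
      linarith
    exact this.not_gt hφu
  refine ⟨hu, not_lt.1 fun hb => ?_⟩
  obtain ⟨ξ, hξ, hbξ⟩ := exists_mem_linearMinorants_lt_inner hKcl hcone hK0 hconv hlsc hg hu hb
  exact (h ξ hξ).not_gt hbξ

end Hilbert

theorem variational_inequality_iff_normalCone_general
    {X Y : Type*} [NormedAddCommGroup X] [InnerProductSpace ℝ X] [CompleteSpace X]
    (K : Set X) (hKcl : IsClosed K)
    (hKcone : ∀ c : ℝ, 0 < c → ∀ x ∈ K, c • x ∈ K) (hK0 : (0 : X) ∈ K)
    (j : Y → X → ℝ) (η : Y)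
    (hjconv : ConvexOn ℝ K (j η))
    (hjpos : ∀ l : ℝ, 0 < l → ∀ v ∈ K, j η (l • v) = l * j η v)
    (hjlip : ∃ Lj : ℝ, ∀ v ∈ K, ∀ w ∈ K, |j η v - j η w| ≤ Lj * ‖v - w‖)
    (f : ℝ → X) (t : ℝ) (z u : X) :
    (u ∈ K ∧ ∀ v ∈ K, j η v - j η u ≥ ⟪f t - z, v - u⟫) ↔
      -u ∈ normalCone ((fun c => f t - c) '' {ξ : X | ∀ v ∈ K, ⟪ξ, v⟫ ≤ j η v}) z := by
  obtain ⟨L, hL⟩ := hjlip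
  have hlsc : LowerSemicontinuousOn (j η) K :=
    (LipschitzOnWith.of_dist_le' (K := L) fun v hv w hw => by
      rw [Real.dist_eq, dist_eq_norm]
      exact hL v hv w hw).continuousOn.lowerSemicontinuousOn
  rw [neg_mem_normalCone_sub_image_iff]
  constructor
  · rintro ⟨hu, hvi⟩
    obtain ⟨hF, hFu⟩ := (forall_inner_sub_le_sub_iff hKcone hK0 hjpos).1 hvi
    exact ⟨hF, fun c hc => (hc u hu).trans hFu⟩
  · rintro ⟨hF, hsupp⟩
    obtain ⟨hu, hFu⟩ := mem_and_le_of_forall_linearMinorants_inner_le hKcl hKcone hK0 hjconv hlsc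
      hjpos hsupp
    exact ⟨hu, (forall_inner_sub_le_sub_iff hKcone hK0 hjpos).2 ⟨hF, hFu⟩⟩

/-- Lemma 3 of the paper: for `C(η) = ∂J(η,·)(0) = {ξ : ⟪ξ,v⟫ ≤ j(η,v) ∀ v ∈ K}`
and `C(η,t) = f(t) - C(η)`, the variational inequality
`u ∈ K`, `j(η,v) - j(η,u) ≥ ⟪f(t) - z, v - u⟫ ∀ v ∈ K` is equivalent to the
inclusion `-u ∈ N_{C(η,t)}(z)`. -/
theorem variational_inequality_iff_normalCone
    {X Y : Type*} [NormedAddCommGroup X] [InnerProductSpace ℝ X] [CompleteSpace X]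
    [NormedAddCommGroup Y] [InnerProductSpace ℝ Y] [CompleteSpace Y]
    (K : Set X) (hKne : K.Nonempty) (hKcl : IsClosed K) (hKcv : Convex ℝ K)
    (hKcone : ∀ c : ℝ, 0 < c → ∀ x ∈ K, c • x ∈ K) (hK0 : (0 : X) ∈ K)
    (j : Y → X → ℝ) (η : Y)
    (hjconv : ConvexOn ℝ K (j η))
    (hjpos : ∀ l : ℝ, 0 < l → ∀ v ∈ K, j η (l • v) = l * j η v)
    (hjlip : ∃ Lj : ℝ, ∀ v ∈ K, ∀ w ∈ K, |j η v - j η w| ≤ Lj * ‖v - w‖)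
    (I : Set ℝ) (f : ℝ → X) (t : ℝ) (ht : t ∈ I) (z u : X) :
    (u ∈ K ∧ ∀ v ∈ K, j η v - j η u ≥ ⟪f t - z, v - u⟫) ↔
      -u ∈ normalCone ((fun c => f t - c) '' {ξ : X | ∀ v ∈ K, ⟪ξ, v⟫ ≤ j η v}) z :=
  variational_inequality_iff_normalCone_general K hKcl hKcone hK0 j η hjconv hjpos hjlip f t z u
end

section
/- Let X be a real Hilbert space, K ⊆ X nonempty closed convex, A : X → X strongly monotone with constant m_A and Lipschitz, Y a Hilbert space, and j : Y × K → ℝ with j(η,·) convex l.s.c. for each η, satisfying j(η₁,v₂) - j(η₁,v₁) + j(η₂,v₁) - j(η₂,v₂) ≤ α_j ∥η₁ - η₂∥_Y ∥v₁ - v₂∥_X for all η₁,η₂ ∈ Y, v₁,v₂ ∈ K. For i = 1, 2 let uᵢ ∈ K satisfy j(ηᵢ,v) - j(ηᵢ,uᵢ) ≥ ⟨fᵢ - Auᵢ - ξᵢ, v - uᵢ⟩ for all v ∈ K, with ηᵢ ∈ Y, ξᵢ, fᵢ ∈ X. Then m_A ∥u₁ - u₂∥_X ≤ α_j ∥η₁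 - η₂∥_Y + ∥ξ₁ - ξ₂∥_X + ∥f₁ - f₂∥_X. -/
open RealInnerProductSpace

/-! Testing each variational inequality with the other solution and adding the two gives
`⟪A u₁ - A u₂, u₁ - u₂⟫ ≤ (j η₁ u₂ - j η₁ u₁ + j η₂ u₁ - j η₂ u₂) + ⟪(f₁ - ξ₁) - (f₂ - ξ₂), u₁ - u₂⟫`.
Strong monotonicity bounds the left side below by `m_A ‖u₁ - u₂‖²`, the hypothesis on `j` and
Cauchy–Schwarz bound the right side by `(α_j ‖η₁ - η₂‖ + ‖ξ₁ - ξ₂‖ + ‖f₁ - f₂‖) ‖u₁ - u₂‖`, and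
one divides by `‖u₁ - u₂‖`. -/

theorem mul_le_of_mul_sq_le_mul {a b t : ℝ} (hb : 0 ≤ b) (ht : 0 ≤ t) (h : a * t ^ 2 ≤ b * t) :
    a * t ≤ b := by
  rcases ht.eq_or_lt with rfl | ht
  · simpa using hb
  · rw [sq, ← mul_assoc] at h
    exact le_of_mul_le_mul_right h ht

section VariationalInequality

variable {X : Type*} [NormedAddCommGroup X] [InnerProductSpace ℝ X]

theorem inner_sub_le_of_variational_inequalities {A : X → X} {φ₁ φ₂ : X → ℝ} {u₁ u₂ g₁ g₂ : X}
    (h₁ : ⟪g₁ - A u₁, u₂ - u₁⟫ ≤ φ₁ u₂ - φ₁ u₁) (h₂ : ⟪g₂ - A u₂, u₁ - u₂⟫ ≤ φ₂ u₁ - φ₂ u₂) :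
    ⟪A u₁ - A u₂, u₁ - u₂⟫ ≤ φ₁ u₂ - φ₁ u₁ + φ₂ u₁ - φ₂ u₂ + ⟪g₁ - g₂, u₁ - u₂⟫ := by
  have sum_of_tests : ⟪A u₁ - A u₂, u₁ - u₂⟫ =
      ⟪g₁ - A u₁, u₂ - u₁⟫ + ⟪g₂ - A u₂, u₁ - u₂⟫ + ⟪g₁ - g₂, u₁ - u₂⟫ := by
    simp only [inner_sub_left, inner_sub_right]
    ring
  linarith

theorem inner_sub_sub_sub_le (f₁ f₂ ξ₁ ξ₂ w : X) :
    ⟪(f₁ - ξ₁) - (f₂ - ξ₂), w⟫ ≤ (‖ξ₁ - ξ₂‖ + ‖f₁ - f₂‖) * ‖w‖ :=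
  calc ⟪(f₁ - ξ₁) - (f₂ - ξ₂), w⟫ ≤ ‖(f₁ - f₂) - (ξ₁ - ξ₂)‖ * ‖w‖ := by
        rw [sub_sub_sub_comm]
        exact real_inner_le_norm _ _
    _ ≤ (‖ξ₁ - ξ₂‖ + ‖f₁ - f₂‖) * ‖w‖ := by
        gcongr
        exact (norm_sub_le _ _).trans_eq (add_comm _ _)

end VariationalInequality

theorem estimate_of_solutions_general
    {X Y : Type*} [NormedAddCommGroup X] [InnerProductSpace ℝ X]
    [NormedAddCommGroup Y]
    (K : Set X)
    (A : X → X) (mA : ℝ)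
    (hAmono : ∀ u v : X, mA * ‖u - v‖ ^ 2 ≤ ⟪A u - A v, u - v⟫)
    (j : Y → X → ℝ)
    (αj : ℝ) (hαj : 0 ≤ αj)
    (hjb : ∀ η₁ η₂ : Y, ∀ v₁ ∈ K, ∀ v₂ ∈ K,
      j η₁ v₂ - j η₁ v₁ + j η₂ v₁ - j η₂ v₂ ≤ αj * ‖η₁ - η₂‖ * ‖v₁ - v₂‖)
    (u₁ u₂ : X) (η₁ η₂ : Y) (ξ₁ ξ₂ f₁ f₂ : X)
    (hu₁ : u₁ ∈ K ∧ ∀ v ∈ K, j η₁ v - j η₁ u₁ ≥ ⟪f₁ - A u₁ - ξ₁, v - u₁⟫)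
    (hu₂ : u₂ ∈ K ∧ ∀ v ∈ K, j η₂ v - j η₂ u₂ ≥ ⟪f₂ - A u₂ - ξ₂, v - u₂⟫) :
    mA * ‖u₁ - u₂‖ ≤ αj * ‖η₁ - η₂‖ + ‖ξ₁ - ξ₂‖ + ‖f₁ - f₂‖ := by
  obtain ⟨hu₁K, hvi₁⟩ := hu₁
  obtain ⟨hu₂K, hvi₂⟩ := hu₂
  have test₁ := hvi₁ u₂ hu₂K
  have test₂ := hvi₂ u₁ hu₁K
  rw [sub_right_comm] at test₁ test₂
  apply mul_le_of_mul_sq_le_mul (by positivity) (norm_nonneg _)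
  calc mA * ‖u₁ - u₂‖ ^ 2 ≤ ⟪A u₁ - A u₂, u₁ - u₂⟫ := hAmono u₁ u₂
    _ ≤ j η₁ u₂ - j η₁ u₁ + j η₂ u₁ - j η₂ u₂ + ⟪(f₁ - ξ₁) - (f₂ - ξ₂), u₁ - u₂⟫ :=
        inner_sub_le_of_variational_inequalities test₁ test₂
    _ ≤ αj * ‖η₁ - η₂‖ * ‖u₁ - u₂‖ + (‖ξ₁ - ξ₂‖ + ‖f₁ - f₂‖) * ‖u₁ - u₂‖ :=
        add_le_add (hjb η₁ η₂ u₁ hu₁K u₂ hu₂K) (inner_sub_sub_sub_le f₁ f₂ ξ₁ ξ₂ _)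
    _ = (αj * ‖η₁ - η₂‖ + ‖ξ₁ - ξ₂‖ + ‖f₁ - f₂‖) * ‖u₁ - u₂‖ := by ring

/-- The a priori estimate for solutions of two parametrized elliptic variational
inequalities: `m_A ∥u₁ - u₂∥ ≤ α_j ∥η₁ - η₂∥ + ∥ξ₁ - ξ₂∥ + ∥f₁ - f₂∥`. -/
theorem estimate_of_solutions
    {X Y : Type*} [NormedAddCommGroup X] [InnerProductSpace ℝ X] [CompleteSpace X]
    [NormedAddCommGroup Y] [InnerProductSpace ℝ Y] [CompleteSpace Y]
    (K : Set X) (hKne : K.Nonempty) (hKcl : IsClosed K) (hKcv : Convex ℝ K)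
    (A : X → X) (mA : ℝ) (hmA : 0 < mA)
    (hAmono : ∀ u v : X, mA * ‖u - v‖ ^ 2 ≤ ⟪A u - A v, u - v⟫)
    (hAlip : ∃ LA : ℝ, 0 < LA ∧ ∀ u v : X, ‖A u - A v‖ ≤ LA * ‖u - v‖)
    (j : Y → X → ℝ) (hjconv : ∀ η : Y, ConvexOn ℝ K (j η))
    (hjlsc : ∀ η : Y, LowerSemicontinuousOn (j η) K)
    (αj : ℝ) (hαj : 0 ≤ αj)
    (hjb : ∀ η₁ η₂ : Y, ∀ v₁ ∈ K, ∀ v₂ ∈ K,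
      j η₁ v₂ - j η₁ v₁ + j η₂ v₁ - j η₂ v₂ ≤ αj * ‖η₁ - η₂‖ * ‖v₁ - v₂‖)
    (u₁ u₂ : X) (η₁ η₂ : Y) (ξ₁ ξ₂ f₁ f₂ : X)
    (hu₁ : u₁ ∈ K ∧ ∀ v ∈ K, j η₁ v - j η₁ u₁ ≥ ⟪f₁ - A u₁ - ξ₁, v - u₁⟫)
    (hu₂ : u₂ ∈ K ∧ ∀ v ∈ K, j η₂ v - j η₂ u₂ ≥ ⟪f₂ - A u₂ - ξ₂, v - u₂⟫) :
    mA * ‖u₁ - u₂‖ ≤ αj * ‖η₁ - η₂‖ + ‖ξ₁ - ξ₂‖ + ‖f₁ - f₂‖ :=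
  estimate_of_solutions_general K A mA hAmono j αj hαj hjb u₁ u₂ η₁ η₂ ξ₁ ξ₂ f₁ f₂ hu₁ hu₂
end

section
/- Let X, Y be real Hilbert spaces, K ⊆ X a nonempty closed convex cone, p : Y → ℝ Lipschitz with constant L₁, and q : K → ℝ convex, positively homogeneous and Lipschitz with constant L₂. Then j(η,v) := p(η)q(v) satisfies j(η₁,v₂) - j(η₁,v₁) + j(η₂,v₁) - j(η₂,v₂) ≤ L₁L₂ ∥η₁ - η₂∥_Y ∥v₁ - v₂∥_X for all η₁,η₂ ∈ Y and v₁,v₂ ∈ K. -/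
open RealInnerProductSpace

/-- If `p : Y → ℝ` is Lipschitz with constant `L₁` and `q : K → ℝ` is convex,
positively homogeneous and Lipschitz with constant `L₂`, then `j(η,v) = p(η)q(v)`
satisfies `j(η₁,v₂) - j(η₁,v₁) + j(η₂,v₁) - j(η₂,v₂) ≤ L₁L₂∥η₁-η₂∥∥v₁-v₂∥`. -/
theorem product_function_condition_j
    {X Y : Type*} [NormedAddCommGroup X] [InnerProductSpace ℝ X] [CompleteSpace X]
    [NormedAddCommGroup Y] [InnerProductSpace ℝ Y] [CompleteSpace Y]
    (K : Set X) (hKne : K.Nonempty) (hKcl : IsClosed K) (hKcv : Convex ℝ K)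
    (hKcone : ∀ c : ℝ, 0 < c → ∀ x ∈ K, c • x ∈ K)
    (p : Y → ℝ) (L₁ : ℝ)
    (hp : ∀ η₁ η₂ : Y, |p η₁ - p η₂| ≤ L₁ * ‖η₁ - η₂‖)
    (q : X → ℝ) (L₂ : ℝ) (hqconv : ConvexOn ℝ K q)
    (hqpos : ∀ l : ℝ, 0 < l → ∀ v ∈ K, q (l • v) = l * q v)
    (hq : ∀ v₁ ∈ K, ∀ v₂ ∈ K, |q v₁ - q v₂| ≤ L₂ * ‖v₁ - v₂‖) :
    ∀ η₁ η₂ : Y, ∀ v₁ ∈ K, ∀ v₂ ∈ K,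
      p η₁ * q v₂ - p η₁ * q v₁ + p η₂ * q v₁ - p η₂ * q v₂ ≤
        L₁ * L₂ * ‖η₁ - η₂‖ * ‖v₁ - v₂‖ := by
  intro η₁ η₂ v₁ hv₁ v₂ hv₂
  have h1 := hp η₁ η₂
  have h2 := hq v₂ hv₂ v₁ hv₁
  calc p η₁ * q v₂ - p η₁ * q v₁ + p η₂ * q v₁ - p η₂ * q v₂
      = (p η₁ - p η₂) * (q v₂ - q v₁) := by ring
    _ ≤ |(p η₁ - p η₂) * (q v₂ - q v₁)| := le_abs_self _
    _ = |p η₁ - p η₂| * |q v₂ - q v₁| := abs_mul _ _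
    _ ≤ (L₁ * ‖η₁ - η₂‖) * (L₂ * ‖v₂ - v₁‖) :=
        mul_le_mul h1 h2 (abs_nonneg _) (le_trans (abs_nonneg _) h1)
    _ = L₁ * L₂ * ‖η₁ - η₂‖ * ‖v₁ - v₂‖ := by rw [norm_sub_rev v₂ v₁]; ring
end

section
/- Let X and Y be real Hilbert spaces, K ⊆ X a nonempty closed convex cone, A : X → X strongly monotone (constant m_A > 0) and Lipschitz, R : C(I;X) → C(I;Y) and S : C(I;X) → C(I;X) operators satisfying, for every compact J ⊆ I, bounds ∥Ru₁(t) - Ru₂(t)∥_Y ≤ l_J^R ∥u₁(t)-u₂(t)∥_X + L_J^R ∫₀ᵗ ∥u₁(s)-u₂(s)∥_X ds and similarly for S with constants l_J^S, L_J^S; let j : Y × K → ℝ satisfy: j(η,·) convex, positively homogeneous, Lipschitz for each η, and j(η₁,v₂)-j(η₁,v₁)+j(η₂,v₁)-j(η₂,v₂) ≤ α_j ∥η₁-η₂∥_Y ∥v₁-v₂∥_X; let f ∈ C(I;X). If (α_j + 1)(l_J^R + l_J^S) < m_A for every compact J ⊆ I, then there exists a unique u ∈ C(I;K) such that for all t ∈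 I: u(t) ∈ K and j(Ru(t), v) - j(Ru(t), u(t)) ≥ ⟨f(t) - Au(t) - Su(t), v - u(t)⟩_X for all v ∈ K. -/
/-!
For fixed `η` and `g`, the elliptic inequality `⟪g - A u, v - u⟫ ≤ j η v - j η u` on `K` has a
unique solution `σ η g`: it is the fixed point of the contraction
`v ↦ prox_{ρ j η} (v - ρ (A v - g))`, where the proximal point minimises a strongly convex
functional. Strong monotonicity of `A` and the hypothesis on `j` make `σ` Lipschitz, so the
time-dependent problem is the fixed-point equation `u t = σ (R u t) (f t - S u t)` for an almost
history-dependent operator with instantaneous constant `(α_j l^R + l^S) / m_A < 1`. On every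
`[0, b]` such an operator is a contraction for the Bielecki norm `sup_t e^{-ct} ‖u t‖` with `c`
large, and on `[0, ∞)` the solutions on the intervals `[0, n]` agree and glue together.
-/

open RealInnerProductSpace Set Filter Topology Real Function

open scoped NNReal

section Minimization

variable {E : Type*} [NormedAddCommGroup E] [NormedSpace ℝ E] [CompleteSpace E]

theorem StrongConvexOn.exists_isMinOn {K : Set E} {m : ℝ} {F : E → ℝ}
    (hF : StrongConvexOn K m F) (hm : 0 < m) (hKne : K.Nonempty) (hKcl : IsClosed K)
    (hFc : ContinuousOn F K) (hFb : BddBelow (F '' K)) : ∃ w ∈ K, IsMinOn F K w := by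
  obtain ⟨hKcv, hF⟩ := hF
  set d := sInf (F '' K)
  have hd : ∀ z ∈ K, d ≤ F z := fun z hz => csInf_le hFb (mem_image_of_mem F hz)
  obtain ⟨u, -, hlim, hmem⟩ := exists_seq_tendsto_sInf (hKne.image F) hFb
  choose z hzK hzF using hmem
  replace hlim : Tendsto (fun n => F (z n)) atTop (𝓝 d) := by simpa only [hzF] using hlim
  -- strong convexity at the midpoint of `x` and `y`, together with `d ≤ F (midpoint)`
  have hmid : ∀ x ∈ K, ∀ y ∈ K, ‖x - y‖ ^ 2 ≤ 4 / m * ((F x - d) + (F y - d)) := by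
    intro x hx y hy
    have h := hF hx hy (a := 1 / 2) (b := 1 / 2) (by norm_num) (by norm_num) (by norm_num)
    have hdm := hd _ (hKcv hx hy (a := 1 / 2) (b := 1 / 2) (by norm_num) (by norm_num)
      (by norm_num))
    rw [div_mul_eq_mul_div, le_div_iff₀ hm]
    simp only [smul_eq_mul] at h
    nlinarith
  have hcauchy : CauchySeq z := by
    rw [cauchySeq_iff_tendsto_dist_atTop_0, ← prod_atTop_atTop_eq]
    have hgap : Tendsto (fun p : ℕ × ℕ => 4 / m * ((F (z p.1) - d) + (F (z p.2) - d)))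
        (atTop ×ˢ atTop) (𝓝 0) := by
      simpa using ((((hlim.comp tendsto_fst).sub_const d).add
        ((hlim.comp tendsto_snd).sub_const d)).const_mul (4 / m))
    refine squeeze_zero (fun _ => dist_nonneg) (fun p => ?_) (by simpa using hgap.sqrt)
    rw [dist_eq_norm]
    exact Real.le_sqrt_of_sq_le (hmid _ (hzK _) _ (hzK _))
  obtain ⟨w, hw⟩ := cauchySeq_tendsto_of_complete hcauchy
  have hwK : w ∈ K := hKcl.mem_of_tendsto hw (Eventually.of_forall hzK)
  have hFw : F w = d := tendsto_nhds_unique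
    ((hFc w hwK).tendsto.comp (tendsto_nhdsWithin_iff.2 ⟨hw, Eventually.of_forall hzK⟩)) hlim
  exact ⟨w, hwK, isMinOn_iff.2 fun z hz => hFw ▸ hd z hz⟩

end Minimization

section VariationalInequality

variable {E : Type*} [NormedAddCommGroup E] [InnerProductSpace ℝ E]

def SolvesVI (K : Set E) (A : E → E) (ψ : E → ℝ) (g u : E) : Prop :=
  u ∈ K ∧ ∀ v ∈ K, ⟪g - A u, v - u⟫ ≤ ψ v - ψ u

theorem SolvesVI.mul_norm_sub_le {K : Set E} {A : E → E} {ψ₁ ψ₂ : E → ℝ} {g₁ g₂ u₁ u₂ : E}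
    {m β : ℝ} (hA : ∀ u v, m * ‖u - v‖ ^ 2 ≤ ⟪A u - A v, u - v⟫)
    (h₁ : SolvesVI K A ψ₁ g₁ u₁) (h₂ : SolvesVI K A ψ₂ g₂ u₂) (hβ : 0 ≤ β)
    (hψ : ψ₁ u₂ - ψ₁ u₁ + ψ₂ u₁ - ψ₂ u₂ ≤ β * ‖u₁ - u₂‖) :
    m * ‖u₁ - u₂‖ ≤ β + ‖g₁ - g₂‖ := by
  have hsum : ⟪g₁ - A u₁, u₂ - u₁⟫ + ⟪g₂ - A u₂, u₁ - u₂⟫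
      = ⟪A u₁ - A u₂, u₁ - u₂⟫ - ⟪g₁ - g₂, u₁ - u₂⟫ := by
    simp only [inner_sub_left, inner_sub_right]; ring
  have hsq : m * ‖u₁ - u₂‖ * ‖u₁ - u₂‖ ≤ (β + ‖g₁ - g₂‖) * ‖u₁ - u₂‖ := by
    nlinarith [hA u₁ u₂, h₁.2 u₂ h₂.1, h₂.2 u₁ h₁.1, real_inner_le_norm (g₁ - g₂) (u₁ - u₂)]
  rcases (norm_nonneg (u₁ - u₂)).eq_or_lt with h | h
  · rw [← h, mul_zero]; positivity
  · exact le_of_mul_le_mul_right hsq h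

theorem SolvesVI.eq {K : Set E} {A : E → E} {ψ : E → ℝ} {g u₁ u₂ : E} {m : ℝ} (hm : 0 < m)
    (hA : ∀ u v, m * ‖u - v‖ ^ 2 ≤ ⟪A u - A v, u - v⟫)
    (h₁ : SolvesVI K A ψ g u₁) (h₂ : SolvesVI K A ψ g u₂) : u₁ = u₂ := by
  have := h₁.mul_norm_sub_le hA h₂ le_rfl (le_of_eq (by ring))
  rw [sub_self, norm_zero, add_zero] at this
  exact sub_eq_zero.1 (norm_le_zero_iff.1 (nonpos_of_mul_nonpos_right this hm))

theorem IsMinOn.solvesVI_id {K : Set E} (hK : Convex ℝ K) {ψ : E → ℝ} (hψ : ConvexOn ℝ K ψ)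
    {y w : E} (hwK : w ∈ K) (hw : IsMinOn (fun z => ‖z - y‖ ^ 2 / 2 + ψ z) K w) :
    SolvesVI K id ψ y w := by
  refine ⟨hwK, fun v hv => ?_⟩
  set B := ψ v - ψ w - ⟪y - w, v - w⟫
  -- compare `w` with the points `w + t • (v - w)` of `K` and divide by `t`
  have key : ∀ t ∈ Ioc (0 : ℝ) 1, 0 ≤ B + t / 2 * ‖v - w‖ ^ 2 := by
    rintro t ⟨ht0, ht1⟩
    have hmin := isMinOn_iff.1 hw _ (hK.add_smul_sub_mem hwK hv ⟨ht0.le, ht1⟩)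
    have hconv : ψ (w + t • (v - w)) ≤ (1 - t) * ψ w + t * ψ v := by
      rw [show w + t • (v - w) = (1 - t) • w + t • v by module]
      exact hψ.2 hwK hv (by linarith) ht0.le (by ring)
    have hnorm : ‖w + t • (v - w) - y‖ ^ 2
        = ‖w - y‖ ^ 2 - 2 * t * ⟪y - w, v - w⟫ + t ^ 2 * ‖v - w‖ ^ 2 := by
      rw [show w + t • (v - w) - y = (w - y) + t • (v - w) by abel, norm_add_sq_real,
        real_inner_smul_right, norm_smul, Real.norm_of_nonneg ht0.le, ← neg_sub y w,
        inner_neg_left]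
      ring
    simp only [hnorm] at hmin
    refine nonneg_of_mul_nonneg_right (a := t) ?_ ht0
    nlinarith
  have hlim : Tendsto (fun t : ℝ => B + t / 2 * ‖v - w‖ ^ 2) (𝓝[>] 0) (𝓝 B) := by
    have hc : Continuous (fun t : ℝ => B + t / 2 * ‖v - w‖ ^ 2) := by fun_prop
    simpa using (hc.tendsto 0).mono_left nhdsWithin_le_nhds
  have := ge_of_tendsto hlim (mem_of_superset (Ioc_mem_nhdsGT zero_lt_one) key)
  exact sub_nonneg.1 this

theorem exists_solvesVI_id [CompleteSpace E] {K : Set E} (hKne : K.Nonempty) (hKcl : IsClosed K)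
    (hKcv : Convex ℝ K) {ψ : E → ℝ} (hψ : ConvexOn ℝ K ψ) {L : ℝ≥0}
    (hψL : LipschitzOnWith L ψ K) (y : E) : ∃ w, SolvesVI K id ψ y w := by
  set F : E → ℝ := fun z => ‖z - y‖ ^ 2 / 2 + ψ z
  have hF : StrongConvexOn K 1 F := by
    have hF' : (fun z => F z - 1 / 2 * ‖z‖ ^ 2) = fun z => ψ z + (‖y‖ ^ 2 / 2 - ⟪y, z⟫) := by
      funext z
      simp only [F, norm_sub_sq_real, real_inner_comm z y]
      ring
    rw [strongConvexOn_iff_convex, hF']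
    exact hψ.add ((convexOn_const _ hKcv).sub ((innerₛₗ ℝ y).concaveOn hKcv))
  have hFc : ContinuousOn F K :=
    (((continuous_id.sub continuous_const).norm.pow 2).div_const 2).continuousOn.add
      hψL.continuousOn
  have hFb : BddBelow (F '' K) := by
    obtain ⟨z₀, hz₀⟩ := hKne
    refine ⟨ψ z₀ - L * ‖y - z₀‖ - L ^ 2 / 2, ?_⟩
    rintro _ ⟨z, hz, rfl⟩
    have hψz := hψL.le_add_mul hz₀ hz
    have htri : dist z₀ z ≤ ‖z - y‖ + ‖y - z₀‖ := by
      rw [dist_comm, dist_eq_norm]; exact norm_sub_le_norm_sub_add_norm_sub z y z₀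
    simp only [F]
    nlinarith [sq_nonneg (‖z - y‖ - L), mul_le_mul_of_nonneg_left htri L.coe_nonneg]
  obtain ⟨w, hwK, hw⟩ := hF.exists_isMinOn one_pos hKne hKcl hFc hFb
  exact ⟨w, hw.solvesVI_id hKcv hψ hwK⟩

theorem norm_sub_sub_smul_sub_sq_le {A : E → E} {m LA ρ : ℝ} (hρ : 0 ≤ ρ)
    (hA : ∀ u v, m * ‖u - v‖ ^ 2 ≤ ⟪A u - A v, u - v⟫)
    (hAlip : ∀ u v, ‖A u - A v‖ ≤ LA * ‖u - v‖) (u v : E) :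
    ‖(u - v) - ρ • (A u - A v)‖ ^ 2 ≤ (1 - 2 * ρ * m + ρ ^ 2 * LA ^ 2) * ‖u - v‖ ^ 2 := by
  have hsq : ‖A u - A v‖ ^ 2 ≤ LA ^ 2 * ‖u - v‖ ^ 2 := by
    rw [← mul_pow]; exact pow_le_pow_left₀ (norm_nonneg _) (hAlip u v) 2
  rw [norm_sub_sq_real, real_inner_smul_right, norm_smul, Real.norm_of_nonneg hρ,
    real_inner_comm]
  nlinarith [hA u v, mul_le_mul_of_nonneg_left hsq (sq_nonneg ρ)]

/-- The solution is the fixed point of `v ↦ prox_{ρψ} (v - ρ (A v - g))`, a contraction for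
`ρ = m / LA ^ 2`. -/
theorem exists_solvesVI [CompleteSpace E] {K : Set E} (hKne : K.Nonempty) (hKcl : IsClosed K)
    (hKcv : Convex ℝ K) {A : E → E} {m LA : ℝ} (hm : 0 < m) (hLA : 0 < LA)
    (hA : ∀ u v, m * ‖u - v‖ ^ 2 ≤ ⟪A u - A v, u - v⟫)
    (hAlip : ∀ u v, ‖A u - A v‖ ≤ LA * ‖u - v‖) {ψ : E → ℝ} (hψ : ConvexOn ℝ K ψ) {L : ℝ≥0}
    (hψL : LipschitzOnWith L ψ K) (g : E) : ∃ u, SolvesVI K A ψ g u := by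
  set ρ := m / LA ^ 2
  have hρ : 0 < ρ := by positivity
  have hρψL : LipschitzOnWith (Real.toNNReal (ρ * L)) (fun v => ρ • ψ v) K :=
    LipschitzOnWith.of_dist_le' fun v hv w hw => by
      rw [dist_smul₀, Real.norm_of_nonneg hρ.le, mul_assoc]
      exact mul_le_mul_of_nonneg_left (hψL.dist_le_mul v hv w hw) hρ.le
  choose T hT using fun v =>
    exists_solvesVI_id hKne hKcl hKcv (hψ.smul hρ.le) hρψL (v - ρ • (A v - g))
  set q := 1 - ρ * m with hq
  have hT_lip : ∀ v₁ v₂, dist (T v₁) (T v₂) ≤ Real.sqrt q * dist v₁ v₂ := by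
    intro v₁ v₂
    have hprox := (hT v₁).mul_norm_sub_le (m := 1) (fun u v => by simp) (hT v₂) le_rfl
      (by simp)
    rw [show v₁ - ρ • (A v₁ - g) - (v₂ - ρ • (A v₂ - g)) = (v₁ - v₂) - ρ • (A v₁ - A v₂) by
      module, one_mul, zero_add] at hprox
    have hstep := norm_sub_sub_smul_sub_sq_le hρ.le hA hAlip v₁ v₂
    have hρLA : ρ ^ 2 * LA ^ 2 = ρ * m := by simp only [ρ]; field_simp
    rw [hρLA, show 1 - 2 * ρ * m + ρ * m = q by rw [hq]; ring] at hstep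
    rw [dist_eq_norm, dist_eq_norm, ← Real.sqrt_sq (norm_nonneg (v₁ - v₂)),
      ← Real.sqrt_mul' _ (sq_nonneg _)]
    exact hprox.trans (Real.le_sqrt_of_sq_le hstep)
  have hTc : ContractingWith (Real.toNNReal (Real.sqrt q)) T := by
    refine ⟨?_, LipschitzWith.of_dist_le' hT_lip⟩
    rw [Real.toNNReal_lt_one, Real.sqrt_lt' one_pos, hq]
    nlinarith
  set u := ContractingWith.fixedPoint T hTc
  have hfix : T u = u := hTc.fixedPoint_isFixedPt
  obtain ⟨huK, hu⟩ := hT u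
  rw [hfix] at huK hu
  refine ⟨u, huK, fun v hv => ?_⟩
  have h := hu v hv
  rw [show u - ρ • (A u - g) - id u = ρ • (g - A u) by simp only [id]; module,
    real_inner_smul_left] at h
  simp only [smul_eq_mul, ← mul_sub] at h
  exact le_of_mul_le_mul_left h hρ

theorem exists_solutionMap [CompleteSpace E] {Y : Type*} [NormedAddCommGroup Y] {K : Set E}
    (hKne : K.Nonempty) (hKcl : IsClosed K) (hKcv : Convex ℝ K) {A : E → E} {m LA : ℝ}
    (hm : 0 < m) (hLA : 0 < LA) (hA : ∀ u v, m * ‖u - v‖ ^ 2 ≤ ⟪A u - A v, u - v⟫)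
    (hAlip : ∀ u v, ‖A u - A v‖ ≤ LA * ‖u - v‖) {j : Y → E → ℝ} (hj : ∀ η, ConvexOn ℝ K (j η))
    (hjL : ∀ η, ∃ L : ℝ≥0, LipschitzOnWith L (j η) K) {α : ℝ} (hα : 0 ≤ α)
    (hjb : ∀ η₁ η₂ : Y, ∀ v₁ ∈ K, ∀ v₂ ∈ K,
      j η₁ v₂ - j η₁ v₁ + j η₂ v₁ - j η₂ v₂ ≤ α * ‖η₁ - η₂‖ * ‖v₁ - v₂‖) :
    ∃ σ : Y → E → E, (∀ η g, SolvesVI K A (j η) g (σ η g)) ∧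
      ∀ η₁ η₂ g₁ g₂, ‖σ η₁ g₁ - σ η₂ g₂‖ ≤ α / m * ‖η₁ - η₂‖ + 1 / m * ‖g₁ - g₂‖ := by
  choose L hL using hjL
  choose σ hσ using fun η g =>
    exists_solvesVI hKne hKcl hKcv hm hLA hA hAlip (hj η) (hL η) g
  refine ⟨σ, hσ, fun η₁ η₂ g₁ g₂ => ?_⟩
  have h := (hσ η₁ g₁).mul_norm_sub_le hA (hσ η₂ g₂) (by positivity)
    (hjb η₁ η₂ _ (hσ η₁ g₁).1 _ (hσ η₂ g₂).1)
  rw [div_mul_eq_mul_div, div_mul_eq_mul_div, ← add_div, le_div_iff₀ hm]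
  linarith

end VariationalInequality

section HistoryDependent

variable {X Y W V : Type*} [NormedAddCommGroup X] [NormedAddCommGroup Y] [NormedAddCommGroup W]
  [NormedAddCommGroup V]

def IsAlmostHistoryDependentOn (Φ : (ℝ → X) → ℝ → Y) (b l L : ℝ) : Prop :=
  ∀ u₁ u₂ : ℝ → X, Continuous u₁ → Continuous u₂ → ∀ t ∈ Icc 0 b,
    ‖Φ u₁ t - Φ u₂ t‖ ≤ l * ‖u₁ t - u₂ t‖ + L * ∫ s in (0:ℝ)..t, ‖u₁ s - u₂ s‖

namespace IsAlmostHistoryDependentOn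

variable {Φ : (ℝ → X) → ℝ → Y} {b l L : ℝ}

theorem apply_eq_of_eqOn (hΦ : IsAlmostHistoryDependentOn Φ b l L) {u₁ u₂ : ℝ → X}
    (hu₁ : Continuous u₁) (hu₂ : Continuous u₂) {t : ℝ} (ht : t ∈ Icc 0 b)
    (heq : EqOn u₁ u₂ (Icc 0 t)) : Φ u₁ t = Φ u₂ t := by
  have hint : ∫ s in (0:ℝ)..t, ‖u₁ s - u₂ s‖ = 0 := by
    rw [intervalIntegral.integral_congr (g := fun _ => (0:ℝ)), intervalIntegral.integral_zero]
    intro s hs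
    rw [uIcc_of_le ht.1] at hs
    simp [heq hs]
  have h := hΦ u₁ u₂ hu₁ hu₂ t ht
  rw [hint, heq (right_mem_Icc.2 ht.1), sub_self, norm_zero, mul_zero, mul_zero, add_zero] at h
  exact sub_eq_zero.1 (norm_le_zero_iff.1 h)

theorem const_sub (hΦ : IsAlmostHistoryDependentOn Φ b l L) (f : ℝ → Y) :
    IsAlmostHistoryDependentOn (fun u t => f t - Φ u t) b l L := fun u₁ u₂ hu₁ hu₂ t ht => by
  rw [sub_sub_sub_cancel_left, norm_sub_rev]
  exact hΦ u₁ u₂ hu₁ hu₂ t ht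

theorem comp₂ {R : (ℝ → X) → ℝ → Y} {S : (ℝ → X) → ℝ → W} {σ : Y → W → V}
    {a c lR LR lS LS : ℝ} (hR : IsAlmostHistoryDependentOn R b lR LR)
    (hS : IsAlmostHistoryDependentOn S b lS LS) (ha : 0 ≤ a) (hc : 0 ≤ c)
    (hσ : ∀ η₁ η₂ g₁ g₂, ‖σ η₁ g₁ - σ η₂ g₂‖ ≤ a * ‖η₁ - η₂‖ + c * ‖g₁ - g₂‖) :
    IsAlmostHistoryDependentOn (fun u t => σ (R u t) (S u t)) b (a * lR + c * lS)
      (a * LR + c * LS) := by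
  intro u₁ u₂ hu₁ hu₂ t ht
  calc _ ≤ a * ‖R u₁ t - R u₂ t‖ + c * ‖S u₁ t - S u₂ t‖ := hσ _ _ _ _
    _ ≤ a * (lR * ‖u₁ t - u₂ t‖ + LR * ∫ s in (0:ℝ)..t, ‖u₁ s - u₂ s‖)
        + c * (lS * ‖u₁ t - u₂ t‖ + LS * ∫ s in (0:ℝ)..t, ‖u₁ s - u₂ s‖) := by
      gcongr
      exacts [hR u₁ u₂ hu₁ hu₂ t ht, hS u₁ u₂ hu₁ hu₂ t ht]
    _ = _ := by ring

theorem norm_sub_le_of_norm_sub_le_exp (hΦ : IsAlmostHistoryDependentOn Φ b l L) (hl : 0 ≤ l)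
    (hL : 0 ≤ L) {c D : ℝ} (hc : 0 < c) {u₁ u₂ : ℝ → X} (hu₁ : Continuous u₁)
    (hu₂ : Continuous u₂) (hD : ∀ s ∈ Icc 0 b, ‖u₁ s - u₂ s‖ ≤ exp (c * s) * D) {t : ℝ}
    (ht : t ∈ Icc 0 b) : ‖Φ u₁ t - Φ u₂ t‖ ≤ (l + L / c) * (exp (c * t) * D) := by
  have hD0 : 0 ≤ D := by
    simpa using (norm_nonneg _).trans (hD 0 (left_mem_Icc.2 (ht.1.trans ht.2)))
  have hexp : ∫ s in (0:ℝ)..t, exp (c * s) = (exp (c * t) - 1) / c := by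
    rw [intervalIntegral.integral_comp_mul_left (fun s => exp s) hc.ne', integral_exp, mul_zero,
      exp_zero, smul_eq_mul, inv_mul_eq_div]
  have hint : ∫ s in (0:ℝ)..t, ‖u₁ s - u₂ s‖ ≤ exp (c * t) * D / c := calc
    _ ≤ ∫ s in (0:ℝ)..t, exp (c * s) * D :=
      intervalIntegral.integral_mono_on ht.1 ((hu₁.sub hu₂).norm.intervalIntegrable _ _)
        ((by fun_prop : Continuous fun s => exp (c * s) * D).intervalIntegrable _ _)
        fun s hs => hD s ⟨hs.1, hs.2.trans ht.2⟩
    _ = (exp (c * t) - 1) / c * D := by rw [intervalIntegral.integral_mul_const, hexp]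
    _ ≤ _ := by rw [div_mul_eq_mul_div, sub_mul]; gcongr; linarith
  calc ‖Φ u₁ t - Φ u₂ t‖ ≤ l * ‖u₁ t - u₂ t‖ + L * ∫ s in (0:ℝ)..t, ‖u₁ s - u₂ s‖ :=
        hΦ u₁ u₂ hu₁ hu₂ t ht
    _ ≤ l * (exp (c * t) * D) + L * (exp (c * t) * D / c) := by gcongr; exact hD t ht
    _ = _ := by ring

end IsAlmostHistoryDependentOn

theorem continuous_uncurry_of_norm_sub_le {σ : Y → W → V} {a c : ℝ}
    (hσ : ∀ η₁ η₂ g₁ g₂, ‖σ η₁ g₁ - σ η₂ g₂‖ ≤ a * ‖η₁ - η₂‖ + c * ‖g₁ - g₂‖) :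
    Continuous (uncurry σ) := by
  refine (LipschitzWith.of_dist_le' (K := |a| + |c|) fun p q => ?_).continuous
  have h₁ : ‖p.1 - q.1‖ ≤ dist p q := by
    rw [← dist_eq_norm, Prod.dist_eq]; exact le_max_left _ _
  have h₂ : ‖p.2 - q.2‖ ≤ dist p q := by
    rw [← dist_eq_norm, Prod.dist_eq]; exact le_max_right _ _
  rw [dist_eq_norm, add_mul]
  refine (hσ _ _ _ _).trans (add_le_add ?_ ?_)
  · exact (mul_le_mul_of_nonneg_right (le_abs_self a) (norm_nonneg _)).trans
      (mul_le_mul_of_nonneg_left h₁ (abs_nonneg a))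
  · exact (mul_le_mul_of_nonneg_right (le_abs_self c) (norm_nonneg _)).trans
      (mul_le_mul_of_nonneg_left h₂ (abs_nonneg c))

theorem exists_continuous_eqOn_Icc_of_eqOn_succ {U : ℕ → ℝ → X} (hU : ∀ n, Continuous (U n))
    (hsucc : ∀ n : ℕ, EqOn (U n) (U (n + 1)) (Icc 0 n)) :
    ∃ u, Continuous u ∧ ∀ n : ℕ, EqOn u (U n) (Icc 0 n) := by
  have hle : ∀ n m : ℕ, n ≤ m → EqOn (U n) (U m) (Icc 0 n) := by
    intro n m hnm
    induction m, hnm using Nat.le_induction with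
    | base => exact eqOn_refl _ _
    | succ m hnm ih => exact ih.trans ((hsucc m).mono (Icc_subset_Icc_right (Nat.cast_le.2 hnm)))
  have hceil : ∀ (n : ℕ) (t : ℝ), t ∈ Icc 0 (n : ℝ) → U ⌈t⌉₊ t = U n t := fun n t ht =>
    hle _ _ (Nat.ceil_le.2 ht.2) ⟨ht.1, Nat.le_ceil t⟩
  refine ⟨fun t => U ⌈max t 0⌉₊ (max t 0), continuous_iff_continuousAt.2 fun t₀ => ?_,
    fun n t ht => ?_⟩
  · have hlt : t₀ < (⌈t₀⌉₊ + 1 : ℕ) := by push_cast; linarith [Nat.le_ceil t₀]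
    have hev : (fun t => U (⌈t₀⌉₊ + 1) (max t 0)) =ᶠ[𝓝 t₀] fun t => U ⌈max t 0⌉₊ (max t 0) :=
      eventuallyEq_of_mem (Iio_mem_nhds hlt) fun t ht =>
        (hceil _ _ ⟨le_max_right _ _, max_le (le_of_lt ht) (Nat.cast_nonneg _)⟩).symm
    exact ((hU _).comp (continuous_id.max continuous_const)).continuousAt.congr hev
  · simp only [max_eq_left ht.1]
    exact hceil n t ht

variable [NormedSpace ℝ X] {b : ℝ}

noncomputable def expLift (hb : 0 ≤ b) (c : ℝ) (w : C(Icc 0 b, X)) (t : ℝ) : X :=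
  exp (c * t) • IccExtend hb w t

theorem continuous_expLift (hb : 0 ≤ b) (c : ℝ) (w : C(Icc 0 b, X)) :
    Continuous (expLift hb c w) :=
  (continuous_const.mul continuous_id).rexp.smul (ContinuousMap.IccExtend hb w).continuous

theorem exists_eqOn_expLift (hb : 0 ≤ b) (c : ℝ) {u : ℝ → X} (hu : Continuous u) :
    ∃ w, EqOn (expLift hb c w) u (Icc 0 b) :=
  ⟨⟨fun t => exp (-(c * t)) • u t, by fun_prop⟩, fun t ht => by
    simp [expLift, IccExtend_of_mem hb _ ht, smul_smul, ← exp_add]⟩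

/-- In the variable `w(t) = e^{-ct} u(t)`, the equation `u = Φ u` on `[0, b]` becomes the
fixed-point problem of this map; the weight turns the sup norm into Bielecki's norm. -/
noncomputable def weightedMap (hb : 0 ≤ b) (c : ℝ) (Φ : (ℝ → X) → ℝ → X)
    (hcont : ∀ u, Continuous u → Continuous (Φ u)) (w : C(Icc 0 b, X)) : C(Icc 0 b, X) where
  toFun t := exp (-(c * t)) • Φ (expLift hb c w) t
  continuous_toFun := by
    have := hcont _ (continuous_expLift hb c w)
    fun_prop

namespace IsAlmostHistoryDependentOn

variable {Φ : (ℝ → X) → ℝ → X} {l L : ℝ}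

theorem exists_contractingWith_weightedMap (hΦ : IsAlmostHistoryDependentOn Φ b l L)
    (hb : 0 ≤ b) (hl : 0 ≤ l) (hl1 : l < 1) (hL : 0 ≤ L)
    (hcont : ∀ u, Continuous u → Continuous (Φ u)) :
    ∃ c K, ContractingWith K (weightedMap hb c Φ hcont) := by
  set c := (L + 1) / (1 - l)
  have hc : 0 < c := div_pos (by linarith) (by linarith)
  have hκ : l + L / c < 1 := by
    have : L / c < 1 - l := by
      rw [div_div_eq_mul_div, div_lt_iff₀ (by linarith)]
      nlinarith
    linarith
  refine ⟨c, Real.toNNReal (l + L / c), by rwa [Real.toNNReal_lt_one],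
    LipschitzWith.of_dist_le' fun w₁ w₂ => ?_⟩
  refine (ContinuousMap.dist_le (by positivity)).2 fun t => ?_
  have hD : ∀ s ∈ Icc 0 b,
      ‖expLift hb c w₁ s - expLift hb c w₂ s‖ ≤ exp (c * s) * dist w₁ w₂ := by
    intro s _
    rw [expLift, expLift, ← smul_sub, norm_smul, Real.norm_of_nonneg (exp_pos _).le,
      ← dist_eq_norm]
    gcongr
    exact ContinuousMap.dist_apply_le_dist _
  have h := hΦ.norm_sub_le_of_norm_sub_le_exp hl hL hc (continuous_expLift hb c w₁)
    (continuous_expLift hb c w₂) hD t.2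
  rw [dist_eq_norm]
  change ‖exp (-(c * t)) • Φ _ t - exp (-(c * t)) • Φ _ t‖ ≤ _
  rw [← smul_sub, norm_smul, Real.norm_of_nonneg (exp_pos _).le]
  calc _ ≤ exp (-(c * t)) * ((l + L / c) * (exp (c * t) * dist w₁ w₂)) := by gcongr
    _ = _ := by rw [exp_neg]; field_simp

theorem isFixedPt_weightedMap_iff (hΦ : IsAlmostHistoryDependentOn Φ b l L) (hb : 0 ≤ b)
    {c : ℝ} (hcont : ∀ u, Continuous u → Continuous (Φ u)) {w : C(Icc 0 b, X)} {u : ℝ → X}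
    (hu : Continuous u) (hwu : EqOn (expLift hb c w) u (Icc 0 b)) :
    IsFixedPt (weightedMap hb c Φ hcont) w ↔ ∀ t ∈ Icc 0 b, Φ u t = u t := by
  rw [IsFixedPt, ContinuousMap.ext_iff, Subtype.forall]
  refine forall₂_congr fun t ht => ?_
  rw [← hwu ht]
  change exp (-(c * t)) • Φ (expLift hb c w) t = w ⟨t, ht⟩ ↔ _
  rw [hΦ.apply_eq_of_eqOn (continuous_expLift hb c w) hu ht
    (hwu.mono (Icc_subset_Icc_right ht.2)), exp_neg, inv_smul_eq_iff₀ (exp_pos _).ne',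
    expLift, IccExtend_of_mem hb w ht]

theorem exists_fixedPoint [CompleteSpace X] (hΦ : IsAlmostHistoryDependentOn Φ b l L)
    (hb : 0 ≤ b) (hl : 0 ≤ l) (hl1 : l < 1) (hL : 0 ≤ L)
    (hcont : ∀ u, Continuous u → Continuous (Φ u)) :
    ∃ u, Continuous u ∧ ∀ t ∈ Icc 0 b, Φ u t = u t := by
  obtain ⟨c, K, hΨ⟩ := hΦ.exists_contractingWith_weightedMap hb hl hl1 hL hcont
  have hu := continuous_expLift hb c (hΨ.fixedPoint _)
  exact ⟨_, hu, (hΦ.isFixedPt_weightedMap_iff hb hcont hu (eqOn_refl _ _)).1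
    hΨ.fixedPoint_isFixedPt⟩

theorem eqOn_of_fixedPoint (hΦ : IsAlmostHistoryDependentOn Φ b l L) (hb : 0 ≤ b) (hl : 0 ≤ l)
    (hl1 : l < 1) (hL : 0 ≤ L) (hcont : ∀ u, Continuous u → Continuous (Φ u)) {u₁ u₂ : ℝ → X}
    (hu₁ : Continuous u₁) (hu₂ : Continuous u₂) (h₁ : ∀ t ∈ Icc 0 b, Φ u₁ t = u₁ t)
    (h₂ : ∀ t ∈ Icc 0 b, Φ u₂ t = u₂ t) : EqOn u₁ u₂ (Icc 0 b) := by
  obtain ⟨c, K, hΨ⟩ := hΦ.exists_contractingWith_weightedMap hb hl hl1 hL hcont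
  obtain ⟨w₁, hw₁⟩ := exists_eqOn_expLift hb c hu₁
  obtain ⟨w₂, hw₂⟩ := exists_eqOn_expLift hb c hu₂
  obtain rfl : w₁ = w₂ :=
    hΨ.fixedPoint_unique' ((hΦ.isFixedPt_weightedMap_iff hb hcont hu₁ hw₁).2 h₁)
      ((hΦ.isFixedPt_weightedMap_iff hb hcont hu₂ hw₂).2 h₂)
  exact fun t ht => (hw₁ ht).symm.trans (hw₂ ht)

end IsAlmostHistoryDependentOn

theorem exists_fixedPoint_Ici [CompleteSpace X] {Φ : (ℝ → X) → ℝ → X}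
    (hcont : ∀ u, Continuous u → Continuous (Φ u))
    (hΦ : ∀ b, 0 ≤ b → ∃ l L, 0 ≤ l ∧ l < 1 ∧ 0 ≤ L ∧ IsAlmostHistoryDependentOn Φ b l L) :
    ∃ u, Continuous u ∧ ∀ t, 0 ≤ t → Φ u t = u t := by
  choose l L hl hl1 hL hΦb using hΦ
  choose U hU hUfix using fun n : ℕ =>
    (hΦb n n.cast_nonneg).exists_fixedPoint n.cast_nonneg (hl _ _) (hl1 _ _) (hL _ _) hcont
  obtain ⟨u, hu, huU⟩ := exists_continuous_eqOn_Icc_of_eqOn_succ hU fun n =>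
    (hΦb n n.cast_nonneg).eqOn_of_fixedPoint n.cast_nonneg (hl _ _) (hl1 _ _) (hL _ _) hcont
      (hU n) (hU (n + 1)) (hUfix n) fun t ht =>
        hUfix (n + 1) t ⟨ht.1, ht.2.trans (by push_cast; linarith)⟩
  refine ⟨u, hu, fun t ht => ?_⟩
  have htn : t ∈ Icc 0 (⌈t⌉₊ : ℝ) := ⟨ht, Nat.le_ceil t⟩
  rw [(hΦb _ (Nat.cast_nonneg _)).apply_eq_of_eqOn hu (hU _) htn
    ((huU _).mono (Icc_subset_Icc_right htn.2)), hUfix _ t htn]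
  exact (huU _ htn).symm

theorem exists_unique_fixedPoint_of_isAlmostHistoryDependentOn [CompleteSpace X] {I : Set ℝ}
    (hI : (∃ T : ℝ, 0 < T ∧ I = Icc 0 T) ∨ I = Ici 0) {Φ : (ℝ → X) → ℝ → X}
    (hcont : ∀ u, Continuous u → Continuous (Φ u))
    (hΦ : ∀ b, 0 ≤ b → Icc 0 b ⊆ I →
      ∃ l L, 0 ≤ l ∧ l < 1 ∧ 0 ≤ L ∧ IsAlmostHistoryDependentOn Φ b l L) :
    ∃ u, Continuous u ∧ (∀ t ∈ I, Φ u t = u t) ∧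
      ∀ u', Continuous u' → (∀ t ∈ I, Φ u' t = u' t) → ∀ t ∈ I, u' t = u t := by
  have hIcc : ∀ t ∈ I, 0 ≤ t ∧ Icc 0 t ⊆ I := by
    rcases hI with ⟨T, -, rfl⟩ | rfl
    · exact fun t ht => ⟨ht.1, Icc_subset_Icc_right ht.2⟩
    · exact fun t ht => ⟨ht, Icc_subset_Ici_self⟩
  obtain ⟨u, hu, hfix⟩ : ∃ u, Continuous u ∧ ∀ t ∈ I, Φ u t = u t := by
    rcases hI with ⟨T, hT, rfl⟩ | rfl
    · obtain ⟨l, L, hl, hl1, hL, hΦT⟩ := hΦ T hT.le subset_rfl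
      exact hΦT.exists_fixedPoint hT.le hl hl1 hL hcont
    · exact exists_fixedPoint_Ici hcont fun b hb => hΦ b hb Icc_subset_Ici_self
  refine ⟨u, hu, hfix, fun u' hu' hfix' t ht => ?_⟩
  obtain ⟨ht0, htI⟩ := hIcc t ht
  obtain ⟨l, L, hl, hl1, hL, hΦt⟩ := hΦ t ht0 htI
  exact hΦt.eqOn_of_fixedPoint ht0 hl hl1 hL hcont hu' hu (fun s hs => hfix' s (htI hs))
    (fun s hs => hfix s (htI hs)) (right_mem_Icc.2 ht0)

end HistoryDependent

theorem time_dependent_inclusion_existence_uniqueness_general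
    {X Y : Type*} [NormedAddCommGroup X] [InnerProductSpace ℝ X] [CompleteSpace X]
    [NormedAddCommGroup Y]
    (I : Set ℝ) (hI : (∃ T : ℝ, 0 < T ∧ I = Set.Icc 0 T) ∨ I = Set.Ici 0)
    (K : Set X) (hKne : K.Nonempty) (hKcl : IsClosed K) (hKcv : Convex ℝ K)
    (A : X → X) (mA : ℝ) (hmA : 0 < mA)
    (hAmono : ∀ u v : X, mA * ‖u - v‖ ^ 2 ≤ ⟪A u - A v, u - v⟫)
    (hAlip : ∃ LA : ℝ, 0 < LA ∧ ∀ u v : X, ‖A u - A v‖ ≤ LA * ‖u - v‖)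
    (R : (ℝ → X) → (ℝ → Y)) (S : (ℝ → X) → (ℝ → X))
    (hRmap : ∀ u : ℝ → X, Continuous u → Continuous (R u))
    (hSmap : ∀ u : ℝ → X, Continuous u → Continuous (S u))
    (lR LR lS LS : Set ℝ → ℝ)
    (hR : ∀ J : Set ℝ, IsCompact J → J ⊆ I → 0 < lR J ∧ 0 < LR J ∧
      ∀ u₁ u₂ : ℝ → X, Continuous u₁ → Continuous u₂ → ∀ t ∈ J,
        ‖R u₁ t - R u₂ t‖ ≤
          lR J * ‖u₁ t - u₂ t‖ + LR J * ∫ s in (0:ℝ)..t, ‖u₁ s - u₂ s‖)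
    (hS : ∀ J : Set ℝ, IsCompact J → J ⊆ I → 0 < lS J ∧ 0 < LS J ∧
      ∀ u₁ u₂ : ℝ → X, Continuous u₁ → Continuous u₂ → ∀ t ∈ J,
        ‖S u₁ t - S u₂ t‖ ≤
          lS J * ‖u₁ t - u₂ t‖ + LS J * ∫ s in (0:ℝ)..t, ‖u₁ s - u₂ s‖)
    (j : Y → X → ℝ)
    (hjconv : ∀ η : Y, ConvexOn ℝ K (j η))
    (hjlip : ∀ η : Y, ∃ Lj : ℝ, ∀ v ∈ K, ∀ w ∈ K, |j η v - j η w| ≤ Lj * ‖v - w‖)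
    (αj : ℝ) (hαj : 0 ≤ αj)
    (hjb : ∀ η₁ η₂ : Y, ∀ v₁ ∈ K, ∀ v₂ ∈ K,
      j η₁ v₂ - j η₁ v₁ + j η₂ v₁ - j η₂ v₂ ≤ αj * ‖η₁ - η₂‖ * ‖v₁ - v₂‖)
    (f : ℝ → X) (hf : Continuous f)
    (hsmall : ∀ J : Set ℝ, IsCompact J → J ⊆ I → (αj + 1) * (lR J + lS J) < mA) :
    ∃ u : ℝ → X,
      (Continuous u ∧ ∀ t ∈ I, u t ∈ K ∧
        ∀ v ∈ K, j (R u t) v - j (R u t) (u t) ≥ ⟪f t - A (u t) - S u t, v - u t⟫) ∧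
      ∀ u' : ℝ → X,
        (Continuous u' ∧ ∀ t ∈ I, u' t ∈ K ∧
          ∀ v ∈ K, j (R u' t) v - j (R u' t) (u' t) ≥
            ⟪f t - A (u' t) - S u' t, v - u' t⟫) →
        ∀ t ∈ I, u' t = u t := by

  obtain ⟨LA, hLA, hAlip⟩ := hAlip
  have hjL : ∀ η, ∃ L : ℝ≥0, LipschitzOnWith L (j η) K := fun η =>
    let ⟨Lj, hLj⟩ := hjlip η
    ⟨_, LipschitzOnWith.of_dist_le' fun v hv w hw => by
      rw [Real.dist_eq, dist_eq_norm]; exact hLj v hv w hw⟩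
  obtain ⟨σ, hσ, hσ_lip⟩ :=
    exists_solutionMap hKne hKcl hKcv hmA hLA hAmono hAlip hjconv hjL hαj hjb
  have hsol : ∀ (u : ℝ → X) t, (u t ∈ K ∧ ∀ v ∈ K,
      j (R u t) v - j (R u t) (u t) ≥ ⟪f t - A (u t) - S u t, v - u t⟫) ↔
      σ (R u t) (f t - S u t) = u t := by
    intro u t
    simp_rw [sub_right_comm (f t) (A (u t))]
    exact ⟨fun h => (hσ _ _).eq hmA hAmono h, fun h => h ▸ hσ _ _⟩
  have hcont : ∀ u, Continuous u → Continuous fun t => σ (R u t) (f t - S u t) := fun u hu =>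
    (continuous_uncurry_of_norm_sub_le hσ_lip).comp ((hRmap u hu).prodMk (hf.sub (hSmap u hu)))
  have hΦ : ∀ b, 0 ≤ b → Icc 0 b ⊆ I → ∃ l L, 0 ≤ l ∧ l < 1 ∧ 0 ≤ L ∧
      IsAlmostHistoryDependentOn (fun u t => σ (R u t) (f t - S u t)) b l L := by
    intro b hb hbI
    obtain ⟨hlR, hLR, hRb⟩ := hR _ isCompact_Icc hbI
    obtain ⟨hlS, hLS, hSb⟩ := hS _ isCompact_Icc hbI
    refine ⟨_, _, by positivity, ?_, by positivity,
      IsAlmostHistoryDependentOn.comp₂ hRb (IsAlmostHistoryDependentOn.const_sub hSb f)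
        (by positivity) (by positivity) hσ_lip⟩
    rw [div_mul_eq_mul_div, div_mul_eq_mul_div, ← add_div, div_lt_one hmA]
    nlinarith [hsmall _ isCompact_Icc hbI]
  obtain ⟨u, hu, hfix, huniq⟩ :=
    exists_unique_fixedPoint_of_isAlmostHistoryDependentOn hI hcont hΦ
  exact ⟨u, ⟨hu, fun t ht => (hsol u t).2 (hfix t ht)⟩,
    fun u' ⟨hu', hu'sol⟩ => huniq u' hu' fun t ht => (hsol u' t).1 (hu'sol t ht)⟩

/-- Theorem 3.1 of the paper (variational-inequality form of the time-dependent
inclusion): under assumptions (K), (A), (R), (S), (j), (f) and the smallness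
condition `(α_j + 1)(l_J^R + l_J^S) < m_A` on every compact `J ⊆ I`, there is a
unique `u ∈ C(I;K)` with
`j(Ru(t),v) - j(Ru(t),u(t)) ≥ ⟪f(t) - Au(t) - Su(t), v - u(t)⟫` for all
`v ∈ K`, `t ∈ I`.  Here `I = [0,T]` or `I = [0,∞)`, and elements of `C(I;·)`
are represented by continuous functions on `ℝ`, unique up to their values on `I`. -/
theorem time_dependent_inclusion_existence_uniqueness
    {X Y : Type*} [NormedAddCommGroup X] [InnerProductSpace ℝ X] [CompleteSpace X]
    [NormedAddCommGroup Y] [InnerProductSpace ℝ Y] [CompleteSpace Y]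
    (I : Set ℝ) (hI : (∃ T : ℝ, 0 < T ∧ I = Set.Icc 0 T) ∨ I = Set.Ici 0)
    (K : Set X) (hKne : K.Nonempty) (hKcl : IsClosed K) (hKcv : Convex ℝ K)
    (hKcone : ∀ c : ℝ, 0 < c → ∀ x ∈ K, c • x ∈ K) (hK0 : (0 : X) ∈ K)
    (A : X → X) (mA : ℝ) (hmA : 0 < mA)
    (hAmono : ∀ u v : X, mA * ‖u - v‖ ^ 2 ≤ ⟪A u - A v, u - v⟫)
    (hAlip : ∃ LA : ℝ, 0 < LA ∧ ∀ u v : X, ‖A u - A v‖ ≤ LA * ‖u - v‖)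
    (R : (ℝ → X) → (ℝ → Y)) (S : (ℝ → X) → (ℝ → X))
    (hRmap : ∀ u : ℝ → X, Continuous u → Continuous (R u))
    (hSmap : ∀ u : ℝ → X, Continuous u → Continuous (S u))
    (lR LR lS LS : Set ℝ → ℝ)
    (hR : ∀ J : Set ℝ, IsCompact J → J ⊆ I → 0 < lR J ∧ 0 < LR J ∧
      ∀ u₁ u₂ : ℝ → X, Continuous u₁ → Continuous u₂ → ∀ t ∈ J,
        ‖R u₁ t - R u₂ t‖ ≤
          lR J * ‖u₁ t - u₂ t‖ + LR J * ∫ s in (0:ℝ)..t, ‖u₁ s - u₂ s‖)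
    (hS : ∀ J : Set ℝ, IsCompact J → J ⊆ I → 0 < lS J ∧ 0 < LS J ∧
      ∀ u₁ u₂ : ℝ → X, Continuous u₁ → Continuous u₂ → ∀ t ∈ J,
        ‖S u₁ t - S u₂ t‖ ≤
          lS J * ‖u₁ t - u₂ t‖ + LS J * ∫ s in (0:ℝ)..t, ‖u₁ s - u₂ s‖)
    (j : Y → X → ℝ)
    (hjconv : ∀ η : Y, ConvexOn ℝ K (j η))
    (hjpos : ∀ η : Y, ∀ l : ℝ, 0 < l → ∀ v ∈ K, j η (l • v) = l * j η v)
    (hjlip : ∀ η : Y, ∃ Lj : ℝ, ∀ v ∈ K, ∀ w ∈ K, |j η v - j η w| ≤ Lj * ‖v - w‖)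
    (αj : ℝ) (hαj : 0 ≤ αj)
    (hjb : ∀ η₁ η₂ : Y, ∀ v₁ ∈ K, ∀ v₂ ∈ K,
      j η₁ v₂ - j η₁ v₁ + j η₂ v₁ - j η₂ v₂ ≤ αj * ‖η₁ - η₂‖ * ‖v₁ - v₂‖)
    (f : ℝ → X) (hf : Continuous f)
    (hsmall : ∀ J : Set ℝ, IsCompact J → J ⊆ I → (αj + 1) * (lR J + lS J) < mA) :
    ∃ u : ℝ → X,
      (Continuous u ∧ ∀ t ∈ I, u t ∈ K ∧
        ∀ v ∈ K, j (R u t) v - j (R u t) (u t) ≥ ⟪f t - A (u t) - S u t, v - u t⟫) ∧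
      ∀ u' : ℝ → X,
        (Continuous u' ∧ ∀ t ∈ I, u' t ∈ K ∧
          ∀ v ∈ K, j (R u' t) v - j (R u' t) (u' t) ≥
            ⟪f t - A (u' t) - S u' t, v - u' t⟫) →
        ∀ t ∈ I, u' t = u t :=
  time_dependent_inclusion_existence_uniqueness_general I hI K hKne hKcl hKcv A mA hmA hAmono hAlip
    R S hRmap hSmap lR LR lS LS hR hS j hjconv hjlip αj hαj hjb f hf hsmall
end
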